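/- arXiv:1904.03505 — 2 statements merged into one kernel-verified Lean document; each statement's English description precedes it below -/
import Mathlib

section
/- (Necessity) If a request profile P is feasible for the fleet (p̄, x), then its E-p transform is dominated pointwise by the capacity curve: E_P(p) ≤ Ω_{p̄,x}(p) for all p ≥ 0. -/
open MeasureTheory Set
open scoped ENNReal

/-- The E-p transform of a request profile `P`: the energy required above power level `p`. -/
noncomputable def Etrans (P : ℝ → ℝ) (p : ℝ) : ℝ≥0∞ :=
  ∫⁻ t in Ioi (0 : ℝ), ENNReal.ofReal (max (P t - p) 0)

/-- The worst-case request profile `R(t) = Σᵢ p̄ᵢ · 1_{[0, xᵢ)}(t)`. -/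
noncomputable def Rprof (n : ℕ) (pbar x : Fin n → ℝ) (t : ℝ) : ℝ :=
  ∑ i, Set.indicator (Ico (0 : ℝ) (x i)) (fun _ => pbar i) t

/-- The capacity curve of the fleet `(p̄, x)`. -/
noncomputable def capacity (n : ℕ) (pbar x : Fin n → ℝ) (p : ℝ) : ℝ≥0∞ :=
  Etrans (Rprof n pbar x) p

/-- A request profile `P` is feasible for the fleet `(p̄, x)`. -/
def Feasible (n : ℕ) (pbar x : Fin n → ℝ) (P : ℝ → ℝ) : Prop :=
  ∃ u : ℝ → Fin n → ℝ, Measurable u ∧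
    (∀ᵐ t ∂(volume.restrict (Ici (0 : ℝ))),
      (∑ i, u t i) = P t ∧ ∀ i, 0 ≤ u t i ∧ u t i ≤ pbar i) ∧
    ∀ t : ℝ, 0 ≤ t → ∀ i, (∫ s in (0 : ℝ)..t, u s i) ≤ pbar i * x i

/-! Let `A` be the set of times in `(0, N]` at which `P` exceeds `p`, and `a` its measure.
Battery `i` delivers at most `p̄ᵢ` at each instant and at most `p̄ᵢ xᵢ` in total, so on `A` it
delivers at most `p̄ᵢ min a xᵢ`; summing, `∫_A P ≤ Σᵢ p̄ᵢ min a xᵢ = ∫_0^a R`. Hence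
`∫_{(0,N]} (P - p)⁺ = ∫_A P - p a ≤ ∫_0^a R - p a ≤ ∫_0^a (R - p)⁺ ≤ Ω(p)`, and letting `N → ∞`
gives `E_P(p) ≤ Ω(p)`; the window `(0, N]` keeps `a` finite even when `p = 0`. -/

theorem setLIntegral_Ioi_eq_iSup_Ioc {μ : Measure ℝ} (f : ℝ → ℝ≥0∞) (a : ℝ) :
    ∫⁻ t in Ioi a, f t ∂μ = ⨆ N : ℕ, ∫⁻ t in Ioc a N, f t ∂μ := by
  have hU : ⋃ N : ℕ, Ioc a N = Ioi a :=
    iUnion_Ioc_eq_Ioi_self_iff.2 fun t _ => exists_nat_ge t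
  rw [← hU, setLIntegral_iUnion_of_directed]
  exact Monotone.directed_le fun _ _ h => Ioc_subset_Ioc_right (by exact_mod_cast h)

theorem setLIntegral_Ioi_tsub_le_of_forall_setLIntegral_le {f g : ℝ → ℝ≥0∞} (hf : Measurable f)
    {c : ℝ≥0∞} (hc : c ≠ ∞)
    (hfg : ∀ B ⊆ Ioi 0, volume B ≠ ∞ → ∫⁻ t in B, f t ≤ ∫⁻ t in Ioc 0 (volume B).toReal, g t) :
    ∫⁻ t in Ioi 0, (f t - c) ≤ ∫⁻ t in Ioi 0, (g t - c) := by
  rw [setLIntegral_Ioi_eq_iSup_Ioc]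
  refine iSup_le fun N => ?_
  set A := {t | c < f t} ∩ Ioc 0 (N : ℝ)
  have hA : MeasurableSet A := (measurableSet_lt measurable_const hf).inter measurableSet_Ioc
  have hAfin : volume A ≠ ∞ := ((measure_mono inter_subset_right).trans_lt measure_Ioc_lt_top).ne
  set a := (volume A).toReal
  have hvol : volume (Ioc 0 a) = volume A := by
    rw [Real.volume_Ioc, sub_zero, ENNReal.ofReal_toReal hAfin]
  calc ∫⁻ t in Ioc 0 (N : ℝ), (f t - c)
      = ∫⁻ t in A, (f t - c) := by
        rw [← Measure.restrict_restrict' measurableSet_Ioc]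
        refine (setLIntegral_eq_of_support_subset fun t ht => ?_).symm
        exact tsub_pos_iff_lt.1 (pos_iff_ne_zero.2 ht)
    _ = (∫⁻ t in A, f t) - c * volume A := by
        rw [lintegral_sub measurable_const (by simpa using ENNReal.mul_ne_top hc hAfin)
          ((ae_restrict_mem hA).mono fun t ht => ht.1.le), setLIntegral_const]
    _ ≤ (∫⁻ t in Ioc 0 a, g t) - ∫⁻ _ in Ioc 0 a, c := by
        rw [setLIntegral_const, hvol]
        exact tsub_le_tsub_right (hfg A (fun t ht => ht.2.1) hAfin) _
    _ ≤ ∫⁻ t in Ioc 0 a, (g t - c) := lintegral_sub_le' _ _ aemeasurable_const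
    _ ≤ ∫⁻ t in Ioi 0, (g t - c) := lintegral_mono_set Ioc_subset_Ioi_self

theorem setLIntegral_Ioi_ofReal_le_of_intervalIntegral_le {v : ℝ → ℝ} {E : ℝ}
    (hv : ∀ t, IntegrableOn v (Ioc 0 t)) (hv0 : ∀ᵐ t ∂volume.restrict (Ioi 0), 0 ≤ v t)
    (hE : ∀ t, 0 ≤ t → ∫ s in (0 : ℝ)..t, v s ≤ E) :
    ∫⁻ t in Ioi 0, ENNReal.ofReal (v t) ≤ ENNReal.ofReal E := by
  rw [setLIntegral_Ioi_eq_iSup_Ioc]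
  refine iSup_le fun N => ?_
  rw [← ofReal_integral_eq_lintegral_ofReal (hv N)
      (ae_restrict_of_ae_restrict_of_subset Ioc_subset_Ioi_self hv0),
    ← intervalIntegral.integral_of_le N.cast_nonneg]
  exact ENNReal.ofReal_le_ofReal (hE N N.cast_nonneg)

theorem Etrans_eq_setLIntegral_tsub (P : ℝ → ℝ) {p : ℝ} (hp : 0 ≤ p) :
    Etrans P p = ∫⁻ t in Ioi 0, (ENNReal.ofReal (P t) - ENNReal.ofReal p) := by
  simp only [Etrans, ENNReal.ofReal_max, ENNReal.ofReal_zero, max_zero, ENNReal.ofReal_sub _ hp]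

theorem setLIntegral_Ioc_ofReal_Rprof {n : ℕ} {pbar : Fin n → ℝ} (hp : ∀ i, 0 ≤ pbar i)
    (x : Fin n → ℝ) (a : ℝ) :
    ∫⁻ t in Ioc 0 a, ENNReal.ofReal (Rprof n pbar x t) =
      ∑ i, ENNReal.ofReal (pbar i) * min (ENNReal.ofReal a) (ENNReal.ofReal (x i)) := by
  have hR : ∀ t, ENNReal.ofReal (Rprof n pbar x t) =
      ∑ i, (Ico 0 (x i)).indicator (fun _ => ENNReal.ofReal (pbar i)) t := fun t => by
    rw [Rprof, ENNReal.ofReal_sum_of_nonneg fun i _ => indicator_nonneg (fun _ _ => hp i) t]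
    exact Finset.sum_congr rfl fun i _ =>
      congrFun (comp_indicator_const (pbar i) ENNReal.ofReal ENNReal.ofReal_zero) t
  simp_rw [hR]
  rw [setLIntegral_congr Ico_ae_eq_Ioc.symm,
    lintegral_finsetSum _ fun i _ => measurable_const.indicator measurableSet_Ico]
  refine Finset.sum_congr rfl fun i _ => ?_
  rw [lintegral_indicator measurableSet_Ico, setLIntegral_const,
    Measure.restrict_apply measurableSet_Ico, Ico_inter_Ico, Real.volume_Ico]
  simp [min_comm]

theorem Feasible.setLIntegral_ofReal_le {n : ℕ} {pbar x : Fin n → ℝ} {P : ℝ → ℝ}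
    (hp : ∀ i, 0 ≤ pbar i) (hfeas : Feasible n pbar x P) {B : Set ℝ} (hB : B ⊆ Ioi 0) :
    ∫⁻ t in B, ENNReal.ofReal (P t) ≤
      ∑ i, ENNReal.ofReal (pbar i) * min (volume B) (ENNReal.ofReal (x i)) := by
  obtain ⟨u, hum, hae, henergy⟩ := hfeas
  have hui : ∀ i, Measurable fun t => u t i := fun i => (measurable_pi_apply i).comp hum
  have haeIoi := ae_restrict_of_ae_restrict_of_subset Ioi_subset_Ici_self hae
  have haeB := ae_restrict_of_ae_restrict_of_subset hB haeIoi
  have hpower : ∀ i, ∫⁻ t in B, ENNReal.ofReal (u t i) ≤ ENNReal.ofReal (pbar i) * volume B :=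
    fun i => (lintegral_mono_ae (haeB.mono fun t ht =>
      ENNReal.ofReal_le_ofReal (ht.2 i).2)).trans_eq (setLIntegral_const _ _)
  have hbudget : ∀ i, ∫⁻ t in B, ENNReal.ofReal (u t i) ≤ ENNReal.ofReal (pbar i * x i) := by
    intro i
    refine (lintegral_mono_set hB).trans (setLIntegral_Ioi_ofReal_le_of_intervalIntegral_le
      (fun t => ?_) (haeIoi.mono fun t ht => (ht.2 i).1) (henergy · · i))
    refine Measure.integrableOn_of_bounded measure_Ioc_lt_top.ne
      (hui i).aestronglyMeasurable (M := pbar i) ?_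
    refine (ae_restrict_of_ae_restrict_of_subset Ioc_subset_Ioi_self haeIoi).mono fun s hs => ?_
    rw [Real.norm_of_nonneg (hs.2 i).1]
    exact (hs.2 i).2
  calc ∫⁻ t in B, ENNReal.ofReal (P t)
      = ∑ i, ∫⁻ t in B, ENNReal.ofReal (u t i) := by
        rw [← lintegral_finsetSum _ fun i _ => (hui i).ennreal_ofReal]
        refine lintegral_congr_ae (haeB.mono fun t ht => ?_)
        dsimp only
        rw [← ht.1, ENNReal.ofReal_sum_of_nonneg fun i _ => (ht.2 i).1]
    _ ≤ ∑ i, ENNReal.ofReal (pbar i) * min (volume B) (ENNReal.ofReal (x i)) := by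
        refine Finset.sum_le_sum fun i _ => ?_
        rw [mul_min, ← ENNReal.ofReal_mul (hp i)]
        exact le_min (hpower i) (hbudget i)

theorem Etrans_le_capacity_of_feasible_general
    (n : ℕ) (pbar x : Fin n → ℝ)
    (hp : ∀ i, 0 < pbar i)
    (P : ℝ → ℝ) (hPm : Measurable P)
    (hfeas : Feasible n pbar x P) :
    ∀ p : ℝ, 0 ≤ p → Etrans P p ≤ capacity n pbar x p := by
  intro p hp0
  rw [capacity, Etrans_eq_setLIntegral_tsub _ hp0, Etrans_eq_setLIntegral_tsub _ hp0]
  refine setLIntegral_Ioi_tsub_le_of_forall_setLIntegral_le hPm.ennreal_ofReal ENNReal.ofReal_ne_top fun B hB hBfin => ?_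
  rw [setLIntegral_Ioc_ofReal_Rprof (fun i => (hp i).le), ENNReal.ofReal_toReal hBfin]
  exact hfeas.setLIntegral_ofReal_le (fun i => (hp i).le) hB

/-- Necessity: if a request profile is feasible for the fleet, then its E-p transform
is dominated pointwise by the capacity curve. -/
theorem Etrans_le_capacity_of_feasible
    (n : ℕ) (hn : 1 ≤ n) (pbar x : Fin n → ℝ)
    (hp : ∀ i, 0 < pbar i) (hx : ∀ i, 0 ≤ x i)
    (P : ℝ → ℝ) (hPm : Measurable P) (hPnn : ∀ t, 0 ≤ t → 0 ≤ P t)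
    (hfeas : Feasible n pbar x P) :
    ∀ p : ℝ, 0 ≤ p → Etrans P p ≤ capacity n pbar x p :=
  Etrans_le_capacity_of_feasible_general n pbar x hp P hPm hfeas
end

section
/- (Sufficiency) If a request profile P satisfies E_P(p) ≤ Ω_{p̄,x}(p) for all p ≥ 0, then P is feasible for the fleet (p̄, x), i.e. P ∈ F_{p̄,x}. -/
open MeasureTheory Set
open scoped ENNReal

/-!
Let `μ q = |{t > 0 | q < P t}|`. By Tonelli, `E_P(p) = ∫_{q > p} μ q dq`, and a unit serving the
slice of the request at the power levels `S` spends the energy `∫_S μ`. So it suffices to split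
`[0, Σ p̄ᵢ)` into sets `Sᵢ` of length `p̄ᵢ` with `∫_{Sᵢ} μ ≤ p̄ᵢ xᵢ`: then
`uᵢ(t) = |Sᵢ ∩ [0, P t)|` is a feasible dispatch. The sets are chosen one unit at a time. By the
intermediate value theorem, unit `j` gets a window `[a, a + p̄ⱼ)` carrying the energy exactly
`p̄ⱼ xⱼ` (or `a = 0`); cutting the window out of the power axis leaves a distribution whose tail
integrals are dominated by the capacity curve of the other units.
-/

lemma Etrans_add_le (g h : ℝ → ℝ) (hh : ∀ t, 0 ≤ h t) (hhm : Measurable h) (p : ℝ) :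
    Etrans (g + h) p ≤ Etrans g p + ∫⁻ t in Ioi 0, ENNReal.ofReal (h t) := by
  rw [Etrans, Etrans, ← lintegral_add_right _ (by fun_prop)]
  refine lintegral_mono fun t => ?_
  rw [← ENNReal.ofReal_add (le_max_right _ _) (hh t), Pi.add_apply]
  exact ENNReal.ofReal_le_ofReal <|
    max_le (by linarith [le_max_left (g t - p) 0]) (by linarith [le_max_right (g t - p) 0, hh t])

lemma Etrans_add_le_of_le (g h : ℝ → ℝ) {d : ℝ} (hh : ∀ t, h t ≤ d) (p : ℝ) :
    Etrans (g + h) (p + d) ≤ Etrans g p :=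
  lintegral_mono fun t => ENNReal.ofReal_le_ofReal <|
    max_le_max_right 0 (by rw [Pi.add_apply]; linarith [hh t])

lemma Etrans_eq_zero_of_le {g : ℝ → ℝ} {p : ℝ} (hg : ∀ t, g t ≤ p) : Etrans g p = 0 := by
  simp [Etrans, hg]

lemma lintegral_Ioi_ofReal_indicator_Ico {d : ℝ} (hd : 0 ≤ d) (x : ℝ) :
    ∫⁻ t in Ioi 0, ENNReal.ofReal ((Ico 0 x).indicator (fun _ => d) t) =
      ENNReal.ofReal (d * x) := by
  have hind : ∀ t, ENNReal.ofReal ((Ico 0 x).indicator (fun _ => d) t) =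
      (Ico 0 x).indicator (fun _ => ENNReal.ofReal d) t := fun t => by
    by_cases ht : t ∈ Ico 0 x <;> simp [ht]
  have hIoo : Ico 0 x ∩ Ioi 0 = Ioo 0 x := by
    ext t
    simp only [mem_inter_iff, mem_Ico, mem_Ioo, mem_Ioi]
    grind
  simp_rw [hind]
  rw [lintegral_indicator measurableSet_Ico, setLIntegral_const,
    Measure.restrict_apply measurableSet_Ico, hIoo, Real.volume_Ioo, sub_zero,
    ← ENNReal.ofReal_mul hd]

lemma ae_le_of_Etrans_eq_zero {P : ℝ → ℝ} (hP : Measurable P) {p : ℝ} (h : Etrans P p = 0) :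
    ∀ᵐ t ∂volume.restrict (Ioi 0), P t ≤ p := by
  rw [Etrans, lintegral_eq_zero_iff (by fun_prop)] at h
  filter_upwards [h] with t ht
  simpa using ht

section Fleet

variable {ι : Type*} (pbar x : ι → ℝ)

noncomputable def fleetProfile (s : Finset ι) (t : ℝ) : ℝ :=
  ∑ i ∈ s, (Ico 0 (x i)).indicator (fun _ => pbar i) t

variable {pbar x}

lemma fleetProfile_le (hp : ∀ i, 0 ≤ pbar i) (s : Finset ι) (t : ℝ) :
    fleetProfile pbar x s t ≤ ∑ i ∈ s, pbar i :=
  Finset.sum_le_sum fun i _ => Set.indicator_le_self' (fun _ _ => hp i) t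

lemma fleetProfile_insert [DecidableEq ι] {j : ι} {s : Finset ι} (hj : j ∉ s) :
    fleetProfile pbar x (insert j s) =
      fleetProfile pbar x s + (Ico 0 (x j)).indicator (fun _ => pbar j) := by
  ext t
  simp only [fleetProfile, Finset.sum_insert hj, Pi.add_apply, add_comm]

lemma Etrans_fleetProfile_insert_le [DecidableEq ι] (hp : ∀ i, 0 ≤ pbar i) {j : ι}
    {s : Finset ι} (hj : j ∉ s) (p : ℝ) :
    Etrans (fleetProfile pbar x (insert j s)) p ≤
      Etrans (fleetProfile pbar x s) p + ENNReal.ofReal (pbar j * x j) := by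
  rw [fleetProfile_insert hj, ← lintegral_Ioi_ofReal_indicator_Ico (hp j)]
  exact Etrans_add_le _ _ (fun t => Set.indicator_nonneg (fun _ _ => hp j) t)
    (measurable_const.indicator measurableSet_Ico) p

lemma Etrans_fleetProfile_insert_add_le [DecidableEq ι] (hp : ∀ i, 0 ≤ pbar i) {j : ι}
    {s : Finset ι} (hj : j ∉ s) (p : ℝ) :
    Etrans (fleetProfile pbar x (insert j s)) (p + pbar j) ≤ Etrans (fleetProfile pbar x s) p := by
  rw [fleetProfile_insert hj]
  exact Etrans_add_le_of_le _ _ (Set.indicator_le_self' fun _ _ => hp j) p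

lemma Etrans_fleetProfile_ne_top (hp : ∀ i, 0 ≤ pbar i) (s : Finset ι) {p : ℝ}
    (hp0 : 0 ≤ p) : Etrans (fleetProfile pbar x s) p ≠ ⊤ := by
  classical
  induction s using Finset.induction_on with
  | empty =>
    rw [Etrans_eq_zero_of_le fun t => by simpa [fleetProfile] using hp0]
    exact ENNReal.zero_ne_top
  | insert j s hj ih =>
    exact ne_top_of_le_ne_top (ENNReal.add_ne_top.2 ⟨ih, ENNReal.ofReal_ne_top⟩)
      (Etrans_fleetProfile_insert_le hp hj p)

end Fleet

section OpenGap

variable {a d : ℝ} {A : Set ℝ}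

noncomputable def openGap (a d q : ℝ) : ℝ := if q < a then q else q + d

lemma measurable_openGap : Measurable (openGap a d) :=
  Measurable.ite measurableSet_Iio measurable_id (measurable_add_const d)

lemma openGap_injective (hd : 0 ≤ d) : Function.Injective (openGap a d) := by
  intro q r h
  simp only [openGap] at h
  split_ifs at h <;> grind

lemma image_openGap (A : Set ℝ) : openGap a d '' A = A ∩ Iio a ∪ (· + d) '' (A ∩ Ici a) := by
  conv_lhs => rw [← inter_union_compl A (Iio a), image_union, compl_Iio]
  congr 1
  · exact (image_congr fun q hq => if_pos hq.2).trans (image_id _)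
  · exact image_congr fun q hq => if_neg (not_lt.2 hq.2)

lemma measurableSet_image_openGap (hA : MeasurableSet A) : MeasurableSet (openGap a d '' A) := by
  rw [image_openGap]
  exact (hA.inter measurableSet_Iio).union
    ((measurableEmbedding_addRight d).measurableSet_image.2 (hA.inter measurableSet_Ici))

lemma disjoint_Ico_image_openGap (A : Set ℝ) : Disjoint (Ico a (a + d)) (openGap a d '' A) := by
  rw [disjoint_left]
  rintro _ hq ⟨r, -, rfl⟩
  simp only [openGap, mem_Ico] at hq
  split_ifs at hq <;> grind

lemma setLIntegral_image_openGap (hd : 0 ≤ d) (g : ℝ → ℝ≥0∞) (hA : MeasurableSet A) :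
    ∫⁻ q in openGap a d '' A, g q = ∫⁻ q in A, g (openGap a d q) := by
  have hdisj : Disjoint (A ∩ Iio a) (A ∩ Ici a) :=
    (Iio_disjoint_Ici le_rfl).mono inf_le_right inf_le_right
  calc ∫⁻ q in openGap a d '' A, g q
      = (∫⁻ q in A ∩ Iio a, g q) + ∫⁻ q in (· + d) '' (A ∩ Ici a), g q := by
        rw [image_openGap, lintegral_union ((measurableEmbedding_addRight d).measurableSet_image.2
          (hA.inter measurableSet_Ici))]
        exact (Iio_disjoint_Ici (le_add_of_nonneg_right hd)).mono inter_subset_right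
          (by rw [← image_add_const_Ici d a]; exact image_mono inter_subset_right)
    _ = (∫⁻ q in A ∩ Iio a, g (openGap a d q)) + ∫⁻ q in A ∩ Ici a, g (openGap a d q) := by
        rw [← (measurePreserving_add_right volume d).setLIntegral_comp_emb
          (measurableEmbedding_addRight d) g (A ∩ Ici a)]
        congr 1
        · exact setLIntegral_congr_fun (hA.inter measurableSet_Iio) fun q hq => by
            rw [openGap, if_pos (mem_Iio.1 hq.2)]
        · exact setLIntegral_congr_fun (hA.inter measurableSet_Ici) fun q hq => by
            rw [openGap, if_neg (not_lt.2 (mem_Ici.1 hq.2))]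
    _ = ∫⁻ q in A, g (openGap a d q) := by
        rw [← lintegral_union (hA.inter measurableSet_Ici) hdisj, ← inter_union_distrib_left,
          Iio_union_Ici, inter_univ]

lemma volume_image_openGap (hd : 0 ≤ d) (hA : MeasurableSet A) :
    volume (openGap a d '' A) = volume A := by
  simpa using setLIntegral_image_openGap hd 1 hA

lemma image_openGap_Ioi_of_le {p : ℝ} (h : a ≤ p) : openGap a d '' Ioi p = Ioi (p + d) := by
  rw [image_openGap, Ioi_inter_Iio, Ioo_eq_empty (not_lt.2 h), inter_eq_left.2 (Ioi_subset_Ici h),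
    image_add_const_Ioi, empty_union]

lemma Ico_union_image_openGap_Ioi (hd : 0 ≤ d) {p : ℝ} (h : p < a) :
    Ico a (a + d) ∪ openGap a d '' Ioi p = Ioi p := by
  rw [image_openGap, Ioi_inter_Iio, inter_eq_right.2 (Ici_subset_Ioi.2 h), image_add_const_Ici]
  ext q
  simp only [mem_union, mem_Ico, mem_Ioo, mem_Ici, mem_Ioi]
  grind

lemma Ico_union_image_openGap_Ico (hd : 0 ≤ d) {c : ℝ} (ha : a ∈ Icc 0 c) :
    Ico a (a + d) ∪ openGap a d '' Ico 0 c = Ico 0 (c + d) := by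
  rw [image_openGap, Ico_inter_Iio, Ico_inter_Ici, image_add_const_Ico]
  ext q
  simp only [mem_union, mem_Ico, mem_Icc] at *
  grind

/- Above the gap the tail integral of `μ ∘ openGap a d` is that of `μ` shifted by `d`; below it,
that of `μ` minus the window `[a, a + d)`, which carries exactly `β`. -/
lemma setLIntegral_Ioi_comp_openGap_le {μ F F' : ℝ → ℝ≥0∞} {β : ℝ≥0∞}
    (hd : 0 ≤ d) (hβ : β ≠ ⊤) (hshift : ∀ p, F (p + d) ≤ F' p) (hsub : ∀ p, F p ≤ F' p + β)
    (hdom : ∀ p, 0 ≤ p → ∫⁻ q in Ioi p, μ q ≤ F p)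
    (hgap : 0 < a → ∫⁻ q in Ico a (a + d), μ q = β) (p : ℝ) (hp : 0 ≤ p) :
    ∫⁻ q in Ioi p, μ (openGap a d q) ≤ F' p := by
  rw [← setLIntegral_image_openGap hd μ measurableSet_Ioi]
  rcases le_or_gt a p with hap | hpa
  · rw [image_openGap_Ioi_of_le hap]
    exact (hdom _ (by linarith)).trans (hshift p)
  · refine (ENNReal.add_le_add_iff_left hβ).1 ?_
    calc β + ∫⁻ q in openGap a d '' Ioi p, μ q = ∫⁻ q in Ioi p, μ q := by
          rw [← hgap (hp.trans_lt hpa), ← lintegral_union (measurableSet_image_openGap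
            measurableSet_Ioi) (disjoint_Ico_image_openGap _), Ico_union_image_openGap_Ioi hd hpa]
      _ ≤ F p := hdom p hp
      _ ≤ F' p + β := hsub p
      _ = β + F' p := add_comm _ _

end OpenGap

section SlidingWindow

variable {μ : ℝ → ℝ≥0∞}

lemma continuous_toReal_setLIntegral_Ico (hμ : Measurable μ) (hfin : ∫⁻ q, μ q ≠ ⊤) {d : ℝ}
    (hd : 0 ≤ d) : Continuous fun b => (∫⁻ q in Ico b (b + d), μ q).toReal := by
  have hint : Integrable fun q => (μ q).toReal :=
    integrable_toReal_of_lintegral_ne_top hμ.aemeasurable hfin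
  have hprim : ∀ b, (∫⁻ q in Ico b (b + d), μ q).toReal =
      (∫ q in (0 : ℝ)..b + d, (μ q).toReal) - ∫ q in (0 : ℝ)..b, (μ q).toReal := fun b => by
    rw [intervalIntegral.integral_interval_sub_left hint.intervalIntegrable hint.intervalIntegrable,
      intervalIntegral.integral_of_le (by linarith), integral_Ioc_eq_integral_Ioo,
      ← integral_Ico_eq_integral_Ioo,
      integral_toReal hμ.aemeasurable.restrict (ae_restrict_of_ae (ae_lt_top hμ hfin))]
  simp_rw [hprim]
  have := intervalIntegral.continuous_primitive (fun _ _ => hint.intervalIntegrable) 0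
  exact (this.comp (continuous_add_const d)).sub this

lemma exists_setLIntegral_Ico_eq (hμ : Measurable μ) (hfin : ∫⁻ q in Ici 0, μ q ≠ ⊤)
    {c d : ℝ} (hc : 0 ≤ c) (hd : 0 ≤ d) {β : ℝ≥0∞} (hβ : β ≠ ⊤)
    (hcβ : ∫⁻ q in Ico c (c + d), μ q ≤ β) :
    ∃ a ∈ Icc 0 c, ∫⁻ q in Ico a (a + d), μ q ≤ β ∧
      (0 < a → ∫⁻ q in Ico a (a + d), μ q = β) := by
  set G := fun b => ∫⁻ q in Ico b (b + d), μ q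
  have hGfin : ∀ b, 0 ≤ b → G b ≠ ⊤ := fun b hb =>
    ne_top_of_le_ne_top hfin (lintegral_mono_set fun q hq => hb.trans hq.1)
  by_cases h0 : G 0 ≤ β
  · exact ⟨0, left_mem_Icc.2 hc, h0, fun h => absurd h (lt_irrefl 0)⟩
  have hcont : ContinuousOn (fun b => (G b).toReal) (Icc 0 c) := by
    refine (continuous_toReal_setLIntegral_Ico (hμ.indicator measurableSet_Ici)
      (by rwa [lintegral_indicator measurableSet_Ici]) hd).continuousOn.congr fun b hb => ?_
    simp only [G]
    rw [setLIntegral_indicator measurableSet_Ici,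
      inter_eq_right.2 fun q (hq : q ∈ Ico b (b + d)) => mem_Ici.2 (hb.1.trans hq.1)]
  obtain ⟨a, ha, hGa⟩ := intermediate_value_Icc' hc hcont
    ⟨ENNReal.toReal_mono hβ hcβ, ENNReal.toReal_mono (hGfin 0 le_rfl) (not_le.1 h0).le⟩
  have hGa : G a = β := (ENNReal.toReal_eq_toReal_iff' (hGfin a ha.1) hβ).1 hGa
  exact ⟨a, ha, hGa.le, fun _ => hGa⟩

end SlidingWindow

section BandAssignment

variable {ι : Type*} (pbar x : ι → ℝ)

structure IsBandAssignment (s : Finset ι) (μ : ℝ → ℝ≥0∞) (S : ι → Set ℝ) : Prop where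
  measurableSet : ∀ i, MeasurableSet (S i)
  pairwiseDisjoint : (s : Set ι).PairwiseDisjoint S
  biUnion_eq : ⋃ i ∈ s, S i = Ico 0 (∑ i ∈ s, pbar i)
  volume_eq : ∀ i ∈ s, volume (S i) = ENNReal.ofReal (pbar i)
  setLIntegral_le : ∀ i ∈ s, ∫⁻ q in S i, μ q ≤ ENNReal.ofReal (pbar i * x i)

variable {pbar x}

lemma IsBandAssignment.insert [DecidableEq ι] (hp : ∀ i, 0 ≤ pbar i) {j : ι} {s : Finset ι}
    (hj : j ∉ s) {μ : ℝ → ℝ≥0∞} {S' : ι → Set ℝ} {a : ℝ} (ha : a ∈ Icc 0 (∑ i ∈ s, pbar i))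
    (hband : ∫⁻ q in Ico a (a + pbar j), μ q ≤ ENNReal.ofReal (pbar j * x j))
    (hS' : IsBandAssignment pbar x s (fun q => μ (openGap a (pbar j) q)) S') :
    IsBandAssignment pbar x (insert j s) μ
      (fun i => if i = j then Ico a (a + pbar j) else openGap a (pbar j) '' S' i) := by
  set S := fun i => if i = j then Ico a (a + pbar j) else openGap a (pbar j) '' S' i
  have hS : ∀ i ∈ s, S i = openGap a (pbar j) '' S' i := fun i hi =>
    if_neg (ne_of_mem_of_not_mem hi hj)
  have hSj : S j = Ico a (a + pbar j) := if_pos rfl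
  constructor
  · intro i
    by_cases hi : i = j
    · simp only [S, if_pos hi, measurableSet_Ico]
    · simp only [S, if_neg hi]
      exact measurableSet_image_openGap (hS'.measurableSet i)
  · rw [Finset.coe_insert, pairwiseDisjoint_insert]
    refine ⟨fun i hi k hk hik => ?_, fun k hk _ => ?_⟩
    · rw [Function.onFun, hS i hi, hS k hk, disjoint_image_iff (openGap_injective (hp j))]
      exact hS'.pairwiseDisjoint hi hk hik
    · rw [hSj, hS k hk]
      exact disjoint_Ico_image_openGap _
  · have : ⋃ i ∈ s, S i = openGap a (pbar j) '' ⋃ i ∈ s, S' i := by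
      rw [image_iUnion₂]
      exact iUnion₂_congr hS
    rw [Finset.set_biUnion_insert, hSj, this, hS'.biUnion_eq,
      Ico_union_image_openGap_Ico (hp j) ha, Finset.sum_insert hj, add_comm]
  · intro i hi
    rcases Finset.mem_insert.1 hi with rfl | hi
    · rw [hSj, Real.volume_Ico, add_sub_cancel_left]
    · rw [hS i hi, volume_image_openGap (hp j) (hS'.measurableSet i), hS'.volume_eq i hi]
  · intro i hi
    rcases Finset.mem_insert.1 hi with rfl | hi
    · rwa [hSj]
    · rw [hS i hi, setLIntegral_image_openGap (hp j) μ (hS'.measurableSet i)]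
      exact hS'.setLIntegral_le i hi

lemma IsBandAssignment.sum_volume_Iio_inter {s : Finset ι} {μ : ℝ → ℝ≥0∞} {S : ι → Set ℝ}
    (hS : IsBandAssignment pbar x s μ S) {v : ℝ}
    (hvT : v ≤ ∑ i ∈ s, pbar i) : ∑ i ∈ s, volume (Iio v ∩ S i) = ENNReal.ofReal v := by
  rw [← measure_biUnion_finset
      (fun i hi k hk hik =>
        (hS.pairwiseDisjoint hi hk hik).mono inter_subset_right inter_subset_right)
      (fun i _ => measurableSet_Iio.inter (hS.measurableSet i)),
    ← inter_iUnion₂, hS.biUnion_eq, inter_comm, Ico_inter_Iio, min_eq_right hvT, Real.volume_Ico,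
    sub_zero]

end BandAssignment

theorem exists_isBandAssignment {ι : Type*} (pbar x : ι → ℝ) (hp : ∀ i, 0 ≤ pbar i)
    (s : Finset ι) {μ : ℝ → ℝ≥0∞} (hμ : Measurable μ)
    (hdom : ∀ p, 0 ≤ p → ∫⁻ q in Ioi p, μ q ≤ Etrans (fleetProfile pbar x s) p) :
    ∃ S, IsBandAssignment pbar x s μ S := by
  classical
  induction s using Finset.induction_on generalizing μ with
  | empty => exact ⟨fun _ => ∅, fun _ => MeasurableSet.empty, by simp, by simp, by simp, by simp⟩
  | insert j s hj ih =>
    set c := ∑ i ∈ s, pbar i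
    have hc : 0 ≤ c := Finset.sum_nonneg fun i _ => hp i
    have hsub := Etrans_fleetProfile_insert_le (x := x) hp hj
    have hfin : ∫⁻ q in Ici 0, μ q ≠ ⊤ := by
      rw [setLIntegral_congr Ioi_ae_eq_Ici.symm]
      exact ne_top_of_le_ne_top (Etrans_fleetProfile_ne_top hp _ le_rfl) (hdom 0 le_rfl)
    have htop : ∫⁻ q in Ico c (c + pbar j), μ q ≤ ENNReal.ofReal (pbar j * x j) := calc
      _ ≤ ∫⁻ q in Ici c, μ q := lintegral_mono_set fun q hq => hq.1
      _ = ∫⁻ q in Ioi c, μ q := setLIntegral_congr Ioi_ae_eq_Ici.symm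
      _ ≤ Etrans (fleetProfile pbar x s) c + ENNReal.ofReal (pbar j * x j) :=
        (hdom c hc).trans (hsub c)
      _ = ENNReal.ofReal (pbar j * x j) := by
        rw [Etrans_eq_zero_of_le (fleetProfile_le hp s), zero_add]
    obtain ⟨a, ha, hband, hgap⟩ :=
      exists_setLIntegral_Ico_eq hμ hfin hc (hp j) ENNReal.ofReal_ne_top htop
    obtain ⟨S', hS'⟩ := ih (hμ.comp measurable_openGap)
      (setLIntegral_Ioi_comp_openGap_le (hp j) ENNReal.ofReal_ne_top
        (Etrans_fleetProfile_insert_add_le hp hj) hsub hdom hgap)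
    exact ⟨_, hS'.insert hp hj ha hband⟩

noncomputable def distribFun (P : ℝ → ℝ) (q : ℝ) : ℝ≥0∞ :=
  volume ({t | q < P t} ∩ Ioi 0)

lemma measurable_distribFun (P : ℝ → ℝ) : Measurable (distribFun P) :=
  Antitone.measurable fun _ _ hqr => measure_mono fun _ ht => ⟨hqr.trans_lt ht.1, ht.2⟩

lemma setLIntegral_distribFun {P : ℝ → ℝ} (hP : Measurable P) {A : Set ℝ} (hA : MeasurableSet A) :
    ∫⁻ q in A, distribFun P q = ∫⁻ t in Ioi 0, volume (Iio (P t) ∩ A) := by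
  have hE : MeasurableSet {z : ℝ × ℝ | z.2 < P z.1} :=
    measurableSet_lt measurable_snd (hP.comp measurable_fst)
  have h := (Measure.prod_apply_symm (μ := volume.restrict (Ioi 0)) (ν := volume.restrict A)
    hE).symm.trans (Measure.prod_apply hE)
  simp only [Measure.restrict_apply' hA, Measure.restrict_apply' measurableSet_Ioi] at h
  exact h

lemma Etrans_eq_setLIntegral_distribFun {P : ℝ → ℝ} (hP : Measurable P) (p : ℝ) :
    Etrans P p = ∫⁻ q in Ioi p, distribFun P q := by
  rw [setLIntegral_distribFun hP measurableSet_Ioi, Etrans]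
  refine lintegral_congr fun t => ?_
  rw [Iio_inter_Ioi, Real.volume_Ioo, ENNReal.ofReal_max, ENNReal.ofReal_zero, max_eq_left zero_le]

theorem feasible_of_isBandAssignment {n : ℕ} {pbar x : Fin n → ℝ} (hp : ∀ i, 0 ≤ pbar i)
    (hx : ∀ i, 0 ≤ x i) {P : ℝ → ℝ} (hP : Measurable P) (hP0 : ∀ t, 0 ≤ t → 0 ≤ P t)
    (hPT : ∀ᵐ t ∂volume.restrict (Ioi 0), P t ≤ ∑ i, pbar i) {S : Fin n → Set ℝ}
    (hS : IsBandAssignment pbar x Finset.univ (distribFun P) S) : Feasible n pbar x P := by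
  have hle : ∀ i v, volume (Iio v ∩ S i) ≤ ENNReal.ofReal (pbar i) := fun i v =>
    (measure_mono inter_subset_right).trans (hS.volume_eq i (Finset.mem_univ i)).le
  have hne : ∀ i v, volume (Iio v ∩ S i) ≠ ⊤ := fun i v =>
    ne_top_of_le_ne_top ENNReal.ofReal_ne_top (hle i v)
  have hmeas : ∀ i, Measurable fun t => volume (Iio (P t) ∩ S i) := fun i =>
    (Monotone.measurable fun _ _ hvw =>
      measure_mono (inter_subset_inter_left _ (Iio_subset_Iio hvw))).comp hP
  refine ⟨fun t i => (volume (Iio (P t) ∩ S i)).toReal,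
    measurable_pi_lambda _ fun i => (hmeas i).ennreal_toReal, ?_, fun t ht i => ?_⟩
  · rw [Measure.restrict_congr_set Ioi_ae_eq_Ici.symm]
    filter_upwards [hPT, ae_restrict_mem measurableSet_Ioi] with t hPt ht
    refine ⟨?_, fun i => ⟨ENNReal.toReal_nonneg, ENNReal.toReal_le_of_le_ofReal (hp i) (hle i _)⟩⟩
    rw [← ENNReal.toReal_sum fun i _ => hne i _, hS.sum_volume_Iio_inter hPt,
      ENNReal.toReal_ofReal (hP0 t (le_of_lt ht))]
  · rw [intervalIntegral.integral_of_le ht,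
      integral_toReal (hmeas i).aemeasurable (ae_of_all _ fun s => (hne i _).lt_top)]
    refine ENNReal.toReal_le_of_le_ofReal (mul_nonneg (hp i) (hx i)) ?_
    calc ∫⁻ s in Ioc 0 t, volume (Iio (P s) ∩ S i)
        ≤ ∫⁻ s in Ioi 0, volume (Iio (P s) ∩ S i) := lintegral_mono_set Ioc_subset_Ioi_self
      _ = ∫⁻ q in S i, distribFun P q := (setLIntegral_distribFun hP (hS.measurableSet i)).symm
      _ ≤ ENNReal.ofReal (pbar i * x i) := hS.setLIntegral_le i (Finset.mem_univ i)

theorem feasible_of_Etrans_le_capacity_general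
    (n : ℕ) (pbar x : Fin n → ℝ)
    (hp : ∀ i, 0 < pbar i) (hx : ∀ i, 0 ≤ x i)
    (P : ℝ → ℝ) (hPm : Measurable P) (hPnn : ∀ t, 0 ≤ t → 0 ≤ P t)
    (hdom : ∀ p : ℝ, 0 ≤ p → Etrans P p ≤ capacity n pbar x p) :
    Feasible n pbar x P := by
  have hp' : ∀ i, 0 ≤ pbar i := fun i => (hp i).le
  have hcap : ∀ p, capacity n pbar x p = Etrans (fleetProfile pbar x Finset.univ) p := fun _ => rfl
  have hPT : ∀ᵐ t ∂volume.restrict (Ioi 0), P t ≤ ∑ i, pbar i := by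
    refine ae_le_of_Etrans_eq_zero hPm (le_antisymm ?_ zero_le)
    rw [← Etrans_eq_zero_of_le (fleetProfile_le hp' Finset.univ), ← hcap]
    exact hdom _ (Finset.sum_nonneg fun i _ => hp' i)
  obtain ⟨S, hS⟩ := exists_isBandAssignment pbar x hp' Finset.univ (measurable_distribFun P)
    fun p hp0 => by rw [← Etrans_eq_setLIntegral_distribFun hPm, ← hcap]; exact hdom p hp0
  exact feasible_of_isBandAssignment hp' hx hPm hPnn hPT hS

/-- Sufficiency: if the E-p transform of a request profile is dominated pointwise by
the capacity curve of the fleet, then the profile is feasible. -/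
theorem feasible_of_Etrans_le_capacity
    (n : ℕ) (hn : 1 ≤ n) (pbar x : Fin n → ℝ)
    (hp : ∀ i, 0 < pbar i) (hx : ∀ i, 0 ≤ x i)
    (P : ℝ → ℝ) (hPm : Measurable P) (hPnn : ∀ t, 0 ≤ t → 0 ≤ P t)
    (hdom : ∀ p : ℝ, 0 ≤ p → Etrans P p ≤ capacity n pbar x p) :
    Feasible n pbar x P :=
  feasible_of_Etrans_le_capacity_general n pbar x hp hx P hPm hPnn hdom
end
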